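/- (Corrected uniform version of Proposition 2.) Let ε > 0, ε̄ ∈ (0,1), ρ > 0, ρ̄ > 0. Let f : ℕ → ℝ with f(n) ≥ 1 and f(n) → ∞, and let b_n ∈ [0,1] with b_n → 1. For each n let k_1^n, …, k_n^n be natural numbers with k_i^n ≥ 1 such that |{i ≤ n : k_i^n ≥ f(n)}|/n ≥ b_n. Then there exists a sequence (δ_n) of nonnegative reals with δ_n → 0 such that for every n, (1/n)·∑_{i=1}^n erf(ε·√((ρ + ρ̄·k_i^n)/2)) ≥ 1 − δ_n·ε̄; that is, if asymptotically almost all agents obtain at least f(n) signals with f(n) → ∞, then δ-perfect learning occurs. -/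

import Mathlib

open Filter
open scoped Classical

/-- The error function `erf x = (2/√π) ∫₀ˣ e^{-t²} dt`. -/
noncomputable def erf (x : ℝ) : ℝ :=
  (2 / Real.sqrt Real.pi) * ∫ t in (0:ℝ)..x, Real.exp (-t ^ 2)

/-!
The summand `erf (ε √((ρ + ρ̄ x)/2))` of an agent with `x` signals is nonnegative, monotone in `x`
and tends to `1` as `x → ∞`. Dropping the agents with fewer than `f n` signals, the average is at
least `b n · erf (ε √((ρ + ρ̄ f n)/2))`, which tends to `1`; `δ n` is the shortfall of this lower
bound from `1`, divided by `ε̄`.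
-/

open Real Topology

lemma integral_exp_neg_sq_Ioi : ∫ t in Set.Ioi (0:ℝ), exp (-t ^ 2) = √π / 2 := by
  simpa using integral_gaussian_Ioi 1

lemma tendsto_erf_atTop : Tendsto erf atTop (𝓝 1) := by
  have hint : MeasureTheory.IntegrableOn (fun t : ℝ => exp (-t ^ 2)) (Set.Ioi 0) := by
    simpa using (integrable_exp_neg_mul_sq one_pos).integrableOn
  have hlim := (MeasureTheory.intervalIntegral_tendsto_integral_Ioi 0 hint tendsto_id).const_mul
    (2 / √π)
  rw [integral_exp_neg_sq_Ioi] at hlim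
  convert hlim using 2
  · rfl
  · field_simp

lemma monotone_erf : Monotone erf := by
  intro a c hac
  have hcont : Continuous fun t : ℝ => exp (-t ^ 2) := by fun_prop
  have hsplit := intervalIntegral.integral_add_adjacent_intervals
    (hcont.intervalIntegrable (μ := MeasureTheory.volume) 0 a) (hcont.intervalIntegrable a c)
  have hnonneg : 0 ≤ ∫ t in a..c, exp (-t ^ 2) :=
    intervalIntegral.integral_nonneg hac fun t _ => (exp_pos _).le
  unfold erf
  gcongr
  linarith

lemma erf_nonneg {x : ℝ} (hx : 0 ≤ x) : 0 ≤ erf x := by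
  unfold erf
  have : 0 ≤ ∫ t in (0:ℝ)..x, exp (-t ^ 2) :=
    intervalIntegral.integral_nonneg hx fun t _ => (exp_pos _).le
  positivity

noncomputable def learningProb (ε ρ ρbar x : ℝ) : ℝ :=
  erf (ε * √((ρ + ρbar * x) / 2))

section learningProb

variable {ε ρbar : ℝ} (ρ : ℝ)

lemma learningProb_nonneg (hε : 0 ≤ ε) (x : ℝ) : 0 ≤ learningProb ε ρ ρbar x :=
  erf_nonneg (by positivity)

lemma monotone_learningProb (hε : 0 ≤ ε) (hρbar : 0 ≤ ρbar) :
    Monotone (learningProb ε ρ ρbar) := fun x y hxy =>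
  monotone_erf <| by gcongr

lemma tendsto_learningProb_atTop (hε : 0 < ε) (hρbar : 0 < ρbar) :
    Tendsto (learningProb ε ρ ρbar) atTop (𝓝 1) := by
  have harg : Tendsto (fun x => ε * √((ρ + ρbar * x) / 2)) atTop atTop :=
    (tendsto_sqrt_atTop.comp <| (tendsto_atTop_add_const_left _ ρ
      (tendsto_id.const_mul_atTop hρbar)).atTop_div_const two_pos).const_mul_atTop hε
  exact tendsto_erf_atTop.comp harg

end learningProb

lemma card_filter_mul_le_sum {ι α : Type*} [Preorder α] (s : Finset ι) {φ : α → ℝ}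
    (hφ : Monotone φ) (hφ0 : ∀ x, 0 ≤ φ x) (t : α) (x : ι → α) :
    ((s.filter fun i => t ≤ x i).card : ℝ) * φ t ≤ ∑ i ∈ s, φ (x i) :=
  calc ((s.filter fun i => t ≤ x i).card : ℝ) * φ t
      ≤ ∑ i ∈ s.filter fun i => t ≤ x i, φ (x i) := by
        rw [← nsmul_eq_mul]
        exact Finset.card_nsmul_le_sum _ _ _ fun i hi => hφ (Finset.mem_filter.1 hi).2
    _ ≤ ∑ i ∈ s, φ (x i) :=
        Finset.sum_le_sum_of_subset_of_nonneg (Finset.filter_subset _ _) fun i _ _ => hφ0 _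

lemma exists_tendsto_zero_one_sub_mul_le {u : ℕ → ℝ} (hu : Tendsto u atTop (𝓝 1))
    {c : ℝ} (hc : 0 < c) :
    ∃ δ : ℕ → ℝ, (∀ n, 0 ≤ δ n) ∧ Tendsto δ atTop (𝓝 0) ∧ ∀ n, 1 - δ n * c ≤ u n := by
  refine ⟨fun n => max 0 ((1 - u n) / c), fun n => le_max_left _ _, ?_, fun n => ?_⟩
  · simpa using (tendsto_const_nhds (x := (0:ℝ))).max (((tendsto_const_nhds (x := (1:ℝ))).sub hu).div_const c)
  · have := mul_le_mul_of_nonneg_right (le_max_right 0 ((1 - u n) / c)) hc.le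
    rw [div_mul_cancel₀ _ hc.ne'] at this
    linarith

theorem stmt_13_general (ε εbar ρ ρbar : ℝ) (hε : 0 < ε) (hεbar : εbar ∈ Set.Ioo (0:ℝ) 1)
    (hρbar : 0 < ρbar)
    (f : ℕ → ℝ) (hftop : Tendsto f atTop atTop)
    (b : ℕ → ℝ) (hb1 : Tendsto b atTop (nhds 1))
    (k : (n : ℕ) → Fin n → ℕ)
    (hfrac : ∀ n : ℕ, 1 ≤ n →
      b n ≤ ((Finset.univ.filter fun i : Fin n => f n ≤ (k n i : ℝ)).card : ℝ) / n) :
    ∃ δ : ℕ → ℝ, (∀ n, 0 ≤ δ n) ∧ Tendsto δ atTop (nhds 0) ∧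
      ∀ n : ℕ, 1 ≤ n →
        1 - δ n * εbar ≤
          (1 / n : ℝ) * ∑ i : Fin n, erf (ε * Real.sqrt ((ρ + ρbar * k n i) / 2)) := by
  set φ := learningProb ε ρ ρbar
  have hlim : Tendsto (fun n => b n * φ (f n)) atTop (𝓝 1) := by
    simpa using hb1.mul ((tendsto_learningProb_atTop ρ hε hρbar).comp hftop)
  obtain ⟨δ, hδ0, hδ, hδle⟩ := exists_tendsto_zero_one_sub_mul_le hlim hεbar.1
  refine ⟨δ, hδ0, hδ, fun n hn => (hδle n).trans ?_⟩
  calc b n * φ (f n)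
      ≤ ((Finset.univ.filter fun i : Fin n => f n ≤ (k n i : ℝ)).card : ℝ) / n * φ (f n) :=
        mul_le_mul_of_nonneg_right (hfrac n hn) (learningProb_nonneg ρ hε.le _)
    _ = 1 / n * (((Finset.univ.filter fun i : Fin n => f n ≤ (k n i : ℝ)).card : ℝ) * φ (f n)) := by
        ring
    _ ≤ 1 / n * ∑ i : Fin n, φ (k n i) := by
        gcongr
        exact card_filter_mul_le_sum _ (monotone_learningProb ρ hε.le hρbar.le)
          (learningProb_nonneg ρ hε.le) _ _

/-- Corrected uniform version of Proposition 2: if asymptotically almost all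
agents obtain at least `f n` signals, where `f n → ∞` (the fraction being at
least `b n → 1`), then there exists a vanishing nonnegative sequence `δ_n`
for which the sufficient condition for `(ε, ε̄, δ_n)`-learning,
`(1/n) ∑ᵢ erf(ε√((ρ + ρ̄ kᵢⁿ)/2)) ≥ 1 - δ_n ε̄`, holds for every `n ≥ 1`;
i.e. δ-perfect learning occurs. -/
theorem stmt_13 (ε εbar ρ ρbar : ℝ) (hε : 0 < ε) (hεbar : εbar ∈ Set.Ioo (0:ℝ) 1)
    (hρ : 0 < ρ) (hρbar : 0 < ρbar)
    (f : ℕ → ℝ) (hf1 : ∀ n, 1 ≤ f n) (hftop : Tendsto f atTop atTop)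
    (b : ℕ → ℝ) (hb01 : ∀ n, b n ∈ Set.Icc (0:ℝ) 1) (hb1 : Tendsto b atTop (nhds 1))
    (k : (n : ℕ) → Fin n → ℕ) (hk : ∀ n i, 1 ≤ k n i)
    (hfrac : ∀ n : ℕ, 1 ≤ n →
      b n ≤ ((Finset.univ.filter fun i : Fin n => f n ≤ (k n i : ℝ)).card : ℝ) / n) :
    ∃ δ : ℕ → ℝ, (∀ n, 0 ≤ δ n) ∧ Tendsto δ atTop (nhds 0) ∧
      ∀ n : ℕ, 1 ≤ n →
        1 - δ n * εbar ≤
          (1 / n : ℝ) * ∑ i : Fin n, erf (ε * Real.sqrt ((ρ + ρbar * k n i) / 2)) :=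
  stmt_13_general ε εbar ρ ρbar hε hεbar hρbar f hftop b hb1 k hfrac
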